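/- arXiv:1505.02838 — 3 statements merged into one kernel-verified Lean document; each statement's English description precedes it below -/
import Mathlib

section
/- Let G and H be finite simple graphs, and suppose G has no edges (G is a graph of isolated vertices). Then the independence complex Ind(H) is shellable if and only if the independence complex Ind(G[H]) of the lexicographical product G[H] is shellable. -/
open Finset

variable {V : Type*}

/-- A facet of a collection of faces `Δ` is a maximal face. -/
def IsFacet (Δ : Set (Finset V)) (F : Finset V) : Prop :=
  F ∈ Δ ∧ ∀ G ∈ Δ, F ⊆ G → F = G

/-- A complex is pure if all facets have the same cardinality. -/
def IsPure (Δ : Set (Finset V)) : Prop :=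
  ∀ F G, IsFacet Δ F → IsFacet Δ G → F.card = G.card

/-- Deletion of a vertex from a complex. -/
def del (Δ : Set (Finset V)) (x : V) : Set (Finset V) := {F ∈ Δ | x ∉ F}

/-- Link of a vertex in a complex. -/
def link [DecidableEq V] (Δ : Set (Finset V)) (x : V) : Set (Finset V) :=
  {F ∈ Δ | x ∉ F ∧ insert x F ∈ Δ}

/-- `F : Fin s → Finset V` is a shelling order of the facets of `Δ`. -/
def IsShelling [DecidableEq V] (Δ : Set (Finset V)) {s : ℕ} (F : Fin s → Finset V) : Prop :=
  (∀ i, IsFacet Δ (F i)) ∧ (∀ G, IsFacet Δ G → ∃ i, F i = G) ∧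
  Function.Injective F ∧
  (∀ i j : Fin s, j < i → ∃ x ∈ F i \ F j, ∃ k, k < i ∧ F i \ F k = {x})

/-- A complex is shellable if it is pure and admits a shelling order of its facets. -/
def Shellable [DecidableEq V] (Δ : Set (Finset V)) : Prop :=
  IsPure Δ ∧ ∃ (s : ℕ) (F : Fin s → Finset V), IsShelling Δ F

/-- A pure complex is vertex decomposable if it is a simplex (unique facet), or some vertex
has pure, vertex decomposable deletion and link. -/
inductive VertexDecomposable [DecidableEq V] : Set (Finset V) → Prop
  | simplex (Δ : Set (Finset V)) (h : ∃! F, IsFacet Δ F) : VertexDecomposable Δ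
  | step (Δ : Set (Finset V)) (x : V)
      (hdp : IsPure (del Δ x)) (hlp : IsPure (link Δ x))
      (hd : VertexDecomposable (del Δ x)) (hl : VertexDecomposable (link Δ x)) :
      VertexDecomposable Δ

/-- The independence complex of a graph: all independent sets. -/
def indComplex (G : SimpleGraph V) : Set (Finset V) :=
  {F | ∀ v ∈ F, ∀ w ∈ F, ¬ G.Adj v w}

/-- The lexicographical product `G[H]`. -/
def lexProd {α β : Type*} (G : SimpleGraph α) (H : SimpleGraph β) :
    SimpleGraph (α × β) where
  Adj p q := G.Adj p.1 q.1 ∨ (p.1 = q.1 ∧ H.Adj p.2 q.2)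
  symm := by
    constructor
    rintro p q (h | ⟨h1, h2⟩)
    · exact Or.inl h.symm
    · exact Or.inr ⟨h1.symm, h2.symm⟩
  loopless := by
    constructor
    rintro p (h | ⟨_, h⟩)
    · exact G.loopless.irrefl _ h
    · exact H.loopless.irrefl _ h

/-- The independence number of a graph. -/
noncomputable def indepNum (G : SimpleGraph V) : ℕ :=
  sSup {n | ∃ F : Finset V, F ∈ indComplex G ∧ F.card = n}

/-- The expansion of a graph `G`, where vertex `v` is replaced by `s v` copies,
and distinct vertices `(i,j)` and `(k,l)` are adjacent iff `i ~ k` in `G` or `i = k`. -/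
def expansion (G : SimpleGraph V) (s : V → ℕ) : SimpleGraph (Σ v : V, Fin (s v)) where
  Adj p q := p ≠ q ∧ (G.Adj p.1 q.1 ∨ p.1 = q.1)
  symm := by
    constructor
    rintro p q ⟨h1, h2 | h2⟩
    · exact ⟨h1.symm, Or.inl h2.symm⟩
    · exact ⟨h1.symm, Or.inr h2.symm⟩
  loopless := by constructor; rintro p ⟨h, _⟩; exact h rfl

/-- The circulant graph `C_n(S)`: vertices `x_a`, `x_b` are adjacent iff
`|a-b| ∈ S` or `n - |a-b| ∈ S`. -/
def circulant (n : ℕ) (S : Set ℕ) : SimpleGraph (Fin n) where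
  Adj a b := a ≠ b ∧ ((max a.val b.val - min a.val b.val) ∈ S ∨
      (n - (max a.val b.val - min a.val b.val)) ∈ S)
  symm := by
    constructor
    rintro a b ⟨h1, h2⟩
    refine ⟨h1.symm, ?_⟩
    rwa [max_comm, min_comm]
  loopless := by constructor; rintro a ⟨h, _⟩; exact h rfl


/-!
Since `G` has no edges, a set of vertices of `G[H]` is independent iff each of its fibers over the
vertices of `G` is independent in `H`: `Ind(G[H])` is the join of `|V_G|` copies of `Ind(H)`, and
its facets are the tuples of facets of `Ind(H)`.

A shelling `F₀, …, F_{s-1}` of `Ind(H)` yields a shelling of the join by listing the tuples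
`(F_{u a})_a` along any linear extension of the pointwise order on the index tuples `u`: if `v`
comes before `u`, then `v a < u a` for some `a`, and replacing `u a` by the index given by the
shelling step from `F_{v a}` to `F_{u a}` is a shelling step of the join.

Conversely, fix a facet `M` of `Ind(H)` and a vertex `a₀`. The facets of the join whose fibers
away from `a₀` all equal `M` are closed under the shelling steps of the join, since a step changes a
single fiber, so restricting a shelling of the join to them and reading the fiber at `a₀` gives a
shelling of `Ind(H)`.
-/

section Fibers

variable {α β : Type*} [DecidableEq α] [DecidableEq β]

def fiber (a : α) (E : Finset (α × β)) : Finset β :=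
  (E.filter (·.1 = a)).image Prod.snd

@[simp]
lemma mem_fiber {a : α} {x : β} {E : Finset (α × β)} : x ∈ fiber a E ↔ (a, x) ∈ E := by
  simp [fiber]

lemma subset_iff_forall_fiber_subset {E E' : Finset (α × β)} :
    E ⊆ E' ↔ ∀ a, fiber a E ⊆ fiber a E' := by
  simp only [subset_iff, mem_fiber, Prod.forall]

lemma eq_of_forall_fiber_eq {E E' : Finset (α × β)} (h : ∀ a, fiber a E = fiber a E') :
    E = E' := by
  ext ⟨a, x⟩
  rw [← mem_fiber, h, mem_fiber]

lemma fiber_sdiff (a : α) (E E' : Finset (α × β)) :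
    fiber a (E \ E') = fiber a E \ fiber a E' := by
  ext; simp

lemma fiber_singleton (a b : α) (x : β) :
    fiber a {(b, x)} = if a = b then {x} else ∅ := by
  ext; split_ifs <;> simp [*, eq_comm]

lemma card_eq_sum_card_fiber [Fintype α] (E : Finset (α × β)) :
    E.card = ∑ a, (fiber a E).card := by
  rw [card_eq_sum_card_fiberwise (f := Prod.fst) (t := univ) fun _ _ => mem_univ _]
  refine sum_congr rfl fun a _ => (card_image_of_injOn ?_).symm
  rintro ⟨b, x⟩ hp ⟨c, y⟩ hq (rfl : x = y)
  simp_all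

variable [Fintype α]

def ofFibers (t : α → Finset β) : Finset (α × β) :=
  univ.biUnion fun a => (t a).image (Prod.mk a)

@[simp]
lemma mem_ofFibers {t : α → Finset β} {p : α × β} : p ∈ ofFibers t ↔ p.2 ∈ t p.1 := by
  obtain ⟨a, x⟩ := p
  simp [ofFibers]

@[simp]
lemma fiber_ofFibers (t : α → Finset β) (a : α) : fiber a (ofFibers t) = t a := by
  ext; simp

lemma ofFibers_sdiff_ofFibers_update (t : α → Finset β) (a : α) (T : Finset β) :
    ofFibers t \ ofFibers (Function.update t a T) = (t a \ T).image (Prod.mk a) := by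
  ext ⟨b, x⟩
  by_cases hb : b = a
  · subst hb; simp
  · simp [hb, Ne.symm hb]

end Fibers

-- The join of copies of `Δ` indexed by `α`, a face `(T_a)_a` of the join being encoded as the set
-- of pairs `(a, x)` with `x ∈ T_a`.
def piComplex (α : Type*) {β : Type*} [DecidableEq α] [DecidableEq β] (Δ : Set (Finset β)) :
    Set (Finset (α × β)) :=
  {E | ∀ a, fiber a E ∈ Δ}

section PiComplex

variable {α β : Type*} [DecidableEq α] [DecidableEq β]

lemma indComplex_lexProd {G : SimpleGraph α} (H : SimpleGraph β) (hG : ∀ v w, ¬ G.Adj v w) :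
    indComplex (lexProd G H) = piComplex α (indComplex H) := by
  ext E
  simp only [indComplex, piComplex, lexProd, Set.mem_ofPred_eq, mem_fiber, Prod.forall, hG,
    false_or, not_and]
  exact ⟨fun h a x hx y hy => h a x hx a y hy rfl,
    fun h a x hx b y hy hab => by subst hab; exact h a x hx y hy⟩

variable [Fintype α] {Δ : Set (Finset β)}

lemma isFacet_piComplex_iff {E : Finset (α × β)} :
    IsFacet (piComplex α Δ) E ↔ ∀ a, IsFacet Δ (fiber a E) := by
  refine ⟨fun ⟨hE, hmax⟩ a => ⟨hE a, fun T hT hsub => ?_⟩, fun h => ?_⟩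
  · let t := Function.update (fiber · E) a T
    have hEt : E = ofFibers t := by
      refine hmax _ (fun b => ?_) (subset_iff_forall_fiber_subset.2 fun b => ?_) <;>
        rw [fiber_ofFibers] <;> rcases eq_or_ne b a with rfl | hb
      · simpa [t] using hT
      · simpa [t, hb] using hE b
      · simpa [t] using hsub
      · simp [t, hb]
    rw [hEt, fiber_ofFibers]
    simp [t]
  · refine ⟨fun a => (h a).1, fun E' hE' hsub => eq_of_forall_fiber_eq fun a => ?_⟩
    exact (h a).2 _ (hE' a) (subset_iff_forall_fiber_subset.1 hsub a)

lemma IsPure.piComplex (h : IsPure Δ) : IsPure (piComplex α Δ) := by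
  intro E E' hE hE'
  rw [isFacet_piComplex_iff] at hE hE'
  rw [card_eq_sum_card_fiber E, card_eq_sum_card_fiber E']
  exact sum_congr rfl fun a _ => h _ _ (hE a) (hE' a)

@[simp]
lemma isFacet_piComplex_ofFibers_iff {t : α → Finset β} :
    IsFacet (piComplex α Δ) (ofFibers t) ↔ ∀ a, IsFacet Δ (t a) := by
  simp [isFacet_piComplex_iff]

lemma isPure_of_isPure_piComplex [Nonempty α] (h : IsPure (piComplex α Δ)) : IsPure Δ := by
  intro T T' hT hT'
  obtain ⟨a₀⟩ := ‹Nonempty α›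
  have hcard := h (ofFibers (Function.update (fun _ => T) a₀ T')) (ofFibers fun _ => T)
    (isFacet_piComplex_ofFibers_iff.2 (Function.forall_update_iff _ _ |>.2 ⟨hT', fun _ _ => hT⟩))
    (isFacet_piComplex_ofFibers_iff.2 fun _ => hT)
  rw [card_eq_sum_card_fiber, card_eq_sum_card_fiber, Fintype.sum_eq_add_sum_compl a₀,
    Fintype.sum_eq_add_sum_compl a₀] at hcard
  simp only [fiber_ofFibers, Function.update_self] at hcard
  rw [sum_congr rfl fun a ha => by rw [Function.update_of_ne (by simpa using ha)],
    add_left_inj] at hcard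
  exact hcard.symm

end PiComplex

section Shelling

variable {W : Type*} [DecidableEq W] {Δ : Set (Finset W)}

lemma exists_isShelling_of_injective {ι κ : Type*} [Fintype ι] [LinearOrder κ]
    (F : ι → Finset W) (key : ι → κ) (hkey : Function.Injective key)
    (hfacet : ∀ i, IsFacet Δ (F i)) (hsurj : ∀ G, IsFacet Δ G → ∃ i, F i = G)
    (hinj : Function.Injective F)
    (hstep : ∀ i j, key j < key i → ∃ x ∈ F i \ F j, ∃ k, key k < key i ∧ F i \ F k = {x}) :
    ∃ (s : ℕ) (F' : Fin s → Finset W), IsShelling Δ F' := by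
  let : LinearOrder ι := LinearOrder.lift' key hkey
  let e := Fintype.orderIsoFinOfCardEq ι rfl
  refine ⟨_, F ∘ e, fun i => hfacet _, fun G hG => ?_, hinj.comp e.injective, fun i j hji => ?_⟩
  · obtain ⟨i, rfl⟩ := hsurj G hG
    exact ⟨e.symm i, by simp⟩
  · obtain ⟨x, hx, k, hk, hdiff⟩ := hstep (e i) (e j) (e.strictMono hji)
    refine ⟨x, hx, e.symm k, ?_, by simpa using hdiff⟩
    rw [← e.lt_iff_lt, e.apply_symm_apply]
    exact hk

end Shelling

section JoinPower

variable {α β : Type*} [DecidableEq α] [DecidableEq β] [Fintype α] {Δ : Set (Finset β)}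

lemma shellable_piComplex (h : Shellable Δ) : Shellable (piComplex α Δ) := by
  obtain ⟨hpure, s, F, hfacet, hsurj, hinj, hstep⟩ := h
  refine ⟨hpure.piComplex, ?_⟩
  let Ψ : (α → Fin s) → Finset (α × β) := fun u => ofFibers (F ∘ u)
  refine exists_isShelling_of_injective Ψ (toLinearExtension : (α → Fin s) → _)
    Function.injective_id (fun u => isFacet_piComplex_iff.2 fun a => ?_) (fun E hE => ?_)
    (fun u v huv => ?_) (fun u v hvu => ?_)
  · simpa [Ψ] using hfacet (u a)
  · choose g hg using fun a => hsurj _ (isFacet_piComplex_iff.1 hE a)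
    exact ⟨g, eq_of_forall_fiber_eq fun a => by simp [Ψ, hg]⟩
  · funext a
    exact hinj (by simpa [Ψ] using congrArg (fiber a) huv)
  · have : ¬ u ≤ v := fun hle => hvu.not_ge (toLinearExtension.monotone hle)
    obtain ⟨a, hlt⟩ : ∃ a, v a < u a := by simpa [Pi.le_def] using this
    obtain ⟨x, hx, k, hk, hdiff⟩ := hstep _ _ hlt
    refine ⟨(a, x), by simpa [Ψ] using hx, Function.update u a k, ?_, ?_⟩
    · exact toLinearExtension.monotone.strictMono_of_injective Function.injective_id
        (update_lt_self_iff.2 hk)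
    · simp only [Ψ, Function.comp_update, ofFibers_sdiff_ofFibers_update]
      simp [hdiff]

lemma shellable_of_shellable_piComplex [Nonempty α] (h : Shellable (piComplex α Δ)) :
    Shellable Δ := by
  obtain ⟨hpure, s, F, hfacet, hsurj, hinj, hstep⟩ := h
  refine ⟨isPure_of_isPure_piComplex hpure, ?_⟩
  by_cases hΔ : ∃ M, IsFacet Δ M
  swap
  · rw [not_exists] at hΔ
    exact ⟨0, Fin.elim0, nofun, fun T hT => (hΔ T hT).elim, nofun, nofun⟩
  obtain ⟨M, hM⟩ := hΔ
  let a₀ : α := Classical.arbitrary α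
  let P : Fin s → Prop := fun i => ∀ a ≠ a₀, fiber a (F i) = M
  refine exists_isShelling_of_injective (fun i : Subtype P => fiber a₀ (F i)) Subtype.val
    Subtype.val_injective (fun i => isFacet_piComplex_iff.1 (hfacet i) a₀) (fun T hT => ?_)
    (fun i j hij => ?_) (fun i j hji => ?_)
  · obtain ⟨i, hi⟩ := hsurj (ofFibers (Function.update (fun _ => M) a₀ T))
      (isFacet_piComplex_ofFibers_iff.2 (Function.forall_update_iff _ _ |>.2 ⟨hT, fun _ _ => hM⟩))
    exact ⟨⟨i, fun a ha => by simp [hi, ha]⟩, by simp [hi]⟩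
  · refine Subtype.ext (hinj (eq_of_forall_fiber_eq fun a => ?_))
    rcases eq_or_ne a a₀ with rfl | ha
    exacts [hij, (i.2 a ha).trans (j.2 a ha).symm]
  · obtain ⟨⟨a, x⟩, hx, k, hk, hdiff⟩ := hstep _ _ hji
    obtain rfl : a = a₀ := by
      by_contra ha
      have hxi : x ∈ fiber a (F i) := mem_fiber.2 (mem_sdiff.1 hx).1
      rw [i.2 a ha, ← j.2 a ha, mem_fiber] at hxi
      exact (mem_sdiff.1 hx).2 hxi
    have hfiber_sdiff : ∀ b, fiber b (F i) \ fiber b (F k) = if b = a₀ then {x} else ∅ := by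
      intro b
      rw [← fiber_sdiff, hdiff, fiber_singleton]
    -- `F k` differs from `F i` only by `(a₀, x)`, so its other fibers contain `M`, hence equal it
    have hkP : P k := fun b hb => by
      refine (hM.2 _ (isFacet_piComplex_iff.1 (hfacet k) b).1 ?_).symm
      rw [← i.2 b hb, ← sdiff_eq_empty_iff_subset, hfiber_sdiff, if_neg hb]
    refine ⟨x, by simpa using hx, ⟨k, hkP⟩, hk, ?_⟩
    simpa using hfiber_sdiff a₀

end JoinPower

theorem stmt0_general {α β : Type*} [Fintype α] [DecidableEq α] [DecidableEq β]
    [Nonempty α] (G : SimpleGraph α) (H : SimpleGraph β)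
    (hG : ∀ v w, ¬ G.Adj v w) :
    Shellable (indComplex H) ↔ Shellable (indComplex (lexProd G H)) := by
  rw [indComplex_lexProd H hG]
  exact ⟨shellable_piComplex, shellable_of_shellable_piComplex⟩

theorem stmt0 {α β : Type*} [Fintype α] [Fintype β] [DecidableEq α] [DecidableEq β]
    [Nonempty α] (G : SimpleGraph α) (H : SimpleGraph β)
    (hG : ∀ v w, ¬ G.Adj v w) :
    Shellable (indComplex H) ↔ Shellable (indComplex (lexProd G H)) :=
  stmt0_general G H hG
end

section
/- Let G be a finite simple graph with at least one edge. If the independence complex Ind(G) is shellable and H = K_m is a complete graph (m ≥ 1), then the independence complex Ind(G[K_m]) of the lexicographical product G[K_m] is shellable. -/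
open Finset

variable {V : Type*}

/-!
The independent sets of `G[K_m]` are the sets meeting each fibre `{v} × Fin m` at most once whose
projection to `G` is independent, so the facets of `Ind (G[K_m])` are the graphs of the colourings
`F → Fin m` of the facets `F` of `Ind G`. Order them lexicographically: first by a shelling of
`Ind G`, then, within one facet, by any linear extension of the pointwise order on colourings.
If `F_k` precedes `F_i` with `F_i \ F_k = {x}`, the colouring of `F_k` that copies `φ` on
`F_i ∩ F_k` has a graph missing only `(x, φ x)` from that of `φ`; and if `ψ` precedes `φ` on the
same facet, then `φ ≰ ψ`, so lowering `φ` to `ψ` at one point gives an earlier colouring whose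
graph misses only one point of that of `φ`.
-/

open Function

section ShellingOrder

variable {ι : Type*} [DecidableEq V] {Δ : Set (Finset V)}

/-- `IsShelling` for facets indexed by an arbitrary linear order instead of `Fin s`. -/
def IsShellingOrder [LinearOrder ι] (Δ : Set (Finset V)) (F : ι → Finset V) : Prop :=
  (∀ i, IsFacet Δ (F i)) ∧ (∀ G, IsFacet Δ G → ∃ i, F i = G) ∧ Injective F ∧
  ∀ i j, j < i → ∃ x ∈ F i \ F j, ∃ k, k < i ∧ F i \ F k = {x}

theorem IsShellingOrder.comp_orderIso {κ : Type*} [LinearOrder ι] [LinearOrder κ]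
    {F : ι → Finset V} (hF : IsShellingOrder Δ F) (e : κ ≃o ι) :
    IsShellingOrder Δ (F ∘ e) := by
  obtain ⟨hfacet, hsurj, hinj, hstep⟩ := hF
  refine ⟨fun i => hfacet (e i), fun G hG => ?_, hinj.comp e.injective, fun i j hji => ?_⟩
  · obtain ⟨i, rfl⟩ := hsurj G hG
    exact ⟨e.symm i, by simp⟩
  · obtain ⟨x, hx, k, hki, hk⟩ := hstep (e i) (e j) (e.lt_iff_lt.mpr hji)
    exact ⟨x, hx, e.symm k, by simpa using e.symm.lt_iff_lt.mpr hki, by simpa using hk⟩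

theorem IsPure.shellable_of_isShellingOrder [LinearOrder ι] [Finite ι] (hΔ : IsPure Δ)
    {F : ι → Finset V} (hF : IsShellingOrder Δ F) : Shellable Δ := by
  have := Fintype.ofFinite ι
  exact ⟨hΔ, _, _, hF.comp_orderIso (monoEquivOfFin ι rfl)⟩

end ShellingOrder

section Graph

variable {β : Type*}

def graphOn (F : Finset V) (φ : F → β) : Finset (V × β) :=
  F.attach.map ⟨fun v => (v.1, φ v), fun _ _ h => Subtype.ext (Prod.ext_iff.mp h).1⟩

variable {F F' : Finset V} {φ : F → β}

@[simp]
theorem mem_graphOn {v : V} {b : β} : (v, b) ∈ graphOn F φ ↔ ∃ h : v ∈ F, φ ⟨v, h⟩ = b := by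
  constructor
  · intro hp
    obtain ⟨w, -, hw⟩ := mem_map.mp hp
    obtain ⟨rfl, rfl⟩ := Prod.ext_iff.mp hw
    exact ⟨w.2, rfl⟩
  · rintro ⟨h, rfl⟩
    exact mem_map.mpr ⟨⟨v, h⟩, mem_attach _ _, rfl⟩

@[simp]
theorem card_graphOn : (graphOn F φ).card = F.card := by
  simp [graphOn]

theorem injOn_fst_graphOn : Set.InjOn Prod.fst (graphOn F φ : Set (V × β)) := by
  rintro ⟨v, a⟩ hp ⟨w, b⟩ hq (rfl : v = w)
  obtain ⟨_, rfl⟩ := mem_graphOn.mp hp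
  obtain ⟨_, rfl⟩ := mem_graphOn.mp hq
  rfl

theorem graphOn_injective : Injective (graphOn (β := β) F) := by
  intro φ ψ h
  funext v
  have hv : (v.1, φ v) ∈ graphOn F ψ := h ▸ mem_graphOn.mpr ⟨v.2, rfl⟩
  simpa using (mem_graphOn.mp hv).2.symm

variable [DecidableEq V]

@[simp]
theorem image_fst_graphOn : (graphOn F φ).image Prod.fst = F := by
  ext v
  simp

theorem exists_subset_graphOn [Nonempty β] {S : Finset (V × β)}
    (hS : Set.InjOn Prod.fst (S : Set (V × β))) (hF : S.image Prod.fst ⊆ F) :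
    ∃ φ : F → β, S ⊆ graphOn F φ := by
  classical
  refine ⟨fun w => if h : ∃ b, (w.1, b) ∈ S then h.choose else Classical.arbitrary β, ?_⟩
  rintro ⟨v, b⟩ hvb
  have hex : ∃ b, (v, b) ∈ S := ⟨b, hvb⟩
  refine mem_graphOn.mpr ⟨hF (mem_image_of_mem _ hvb), ?_⟩
  simp only [dif_pos hex]
  exact congrArg Prod.snd (hS hex.choose_spec hvb rfl)

theorem exists_graphOn_eq [Nonempty β] {S : Finset (V × β)}
    (hS : Set.InjOn Prod.fst (S : Set (V × β))) (hF : S.image Prod.fst = F) :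
    ∃ φ : F → β, graphOn F φ = S := by
  obtain ⟨φ, hφ⟩ := exists_subset_graphOn hS hF.le
  refine ⟨φ, (eq_of_subset_of_card_le hφ ?_).symm⟩
  rw [card_graphOn, ← hF, card_image_of_injOn hS]

variable [DecidableEq β]

theorem graphOn_sdiff_graphOn_eq_singleton {ψ : F' → β} (v : F)
    (hother : ∀ w : F, w ≠ v → ∃ h : w.1 ∈ F', ψ ⟨w, h⟩ = φ w)
    (hv : ∀ h : v.1 ∈ F', ψ ⟨v, h⟩ ≠ φ v) :
    graphOn F φ \ graphOn F' ψ = {(v.1, φ v)} := by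
  ext ⟨w, b⟩
  simp only [mem_sdiff, mem_graphOn, mem_singleton, not_exists]
  constructor
  · rintro ⟨⟨hw, rfl⟩, hnot⟩
    by_cases hwv : (⟨w, hw⟩ : F) = v
    · subst hwv
      rfl
    · obtain ⟨h, hψ⟩ := hother _ hwv
      exact absurd hψ (hnot h)
  · rintro ⟨rfl, rfl⟩
    exact ⟨⟨v.2, rfl⟩, hv⟩

theorem graphOn_sdiff_graphOn_update (t : F) {b : β} (hb : b ≠ φ t) :
    graphOn F φ \ graphOn F (update φ t b) = {(t.1, φ t)} :=
  graphOn_sdiff_graphOn_eq_singleton t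
    (fun w hw => ⟨w.2, update_of_ne hw _ _⟩) (fun _ => by simpa using hb)

theorem exists_graphOn_sdiff_eq_singleton [Nonempty β] (φ : F → β) {x : V} (hx : x ∈ F)
    (hF : F \ F' = {x}) : ∃ ψ : F' → β, graphOn F φ \ graphOn F' ψ = {(x, φ ⟨x, hx⟩)} := by
  have hsub (w : V) (hw : w ∈ F) (hwx : w ≠ x) : w ∈ F' := by
    by_contra hw'
    exact hwx (mem_singleton.mp (hF ▸ mem_sdiff.mpr ⟨hw, hw'⟩))
  have hx' : x ∉ F' := (mem_sdiff.mp (hF.symm ▸ mem_singleton_self x : x ∈ F \ F')).2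
  refine ⟨fun w => if h : w.1 ∈ F then φ ⟨w, h⟩ else Classical.arbitrary β,
    graphOn_sdiff_graphOn_eq_singleton ⟨x, hx⟩ (fun w hw => ?_) (fun h => absurd h hx')⟩
  have hwx : w.1 ≠ x := fun h => hw (Subtype.ext h)
  exact ⟨hsub w w.2 hwx, by simp⟩

end Graph

def liftComplex [DecidableEq V] (Δ : Set (Finset V)) (β : Type*) : Set (Finset (V × β)) :=
  {S | Set.InjOn Prod.fst (S : Set (V × β)) ∧ S.image Prod.fst ∈ Δ}

section LiftComplex

variable {ι β : Type*} [DecidableEq V] {Δ : Set (Finset V)} {F : Finset V}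

theorem graphOn_mem_liftComplex_iff {φ : F → β} : graphOn F φ ∈ liftComplex Δ β ↔ F ∈ Δ := by
  simp [liftComplex, injOn_fst_graphOn]

theorem IsFacet.graphOn (hF : IsFacet Δ F) (φ : F → β) :
    IsFacet (liftComplex Δ β) (graphOn F φ) := by
  refine ⟨graphOn_mem_liftComplex_iff.mpr hF.1, fun S ⟨hinj, hS⟩ hsub => ?_⟩
  have himage : F = S.image Prod.fst :=
    hF.2 _ hS (by simpa using image_subset_image (f := Prod.fst) hsub)
  refine eq_of_subset_of_card_le hsub ?_
  rw [card_graphOn, himage, card_image_of_injOn hinj]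

theorem IsFacet.image_fst_of_liftComplex [Nonempty β] {S : Finset (V × β)}
    (hS : IsFacet (liftComplex Δ β) S) : IsFacet Δ (S.image Prod.fst) := by
  refine ⟨hS.1.2, fun T hT hsub => ?_⟩
  obtain ⟨ψ, hψ⟩ := exists_subset_graphOn hS.1.1 hsub
  rw [hS.2 _ (graphOn_mem_liftComplex_iff.mpr hT) hψ, image_fst_graphOn]

theorem IsPure.liftComplex [Nonempty β] (hΔ : IsPure Δ) : IsPure (liftComplex Δ β) := by
  intro S T hS hT
  rw [← card_image_of_injOn hS.1.1, ← card_image_of_injOn hT.1.1]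
  exact hΔ _ _ hS.image_fst_of_liftComplex hT.image_fst_of_liftComplex

theorem exists_toLinearExtension_update_lt {κ : Type*} [DecidableEq κ] [LinearOrder β] {φ ψ : κ → β}
    (h : toLinearExtension ψ < toLinearExtension φ) :
    ∃ t, ψ t ≠ φ t ∧ toLinearExtension (update φ t (ψ t)) < toLinearExtension φ := by
  have hnle : ¬ φ ≤ ψ := fun hle => (toLinearExtension.monotone hle).not_gt h
  obtain ⟨t, ht⟩ := not_forall.mp hnle
  have hlt : ψ t < φ t := lt_of_not_ge ht
  refine ⟨t, hlt.ne, lt_of_le_of_ne (toLinearExtension.monotone ?_) fun heq => ?_⟩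
  · exact update_le_iff.mpr ⟨hlt.le, fun _ _ => le_rfl⟩
  · change update φ t (ψ t) = φ at heq
    exact hlt.ne (by simpa using congrFun heq t)

variable [LinearOrder β] [Nonempty β]

theorem IsShellingOrder.liftComplex [LinearOrder ι] {F : ι → Finset V}
    (hF : IsShellingOrder Δ F) :
    IsShellingOrder (liftComplex Δ β)
      (fun p : Σₗ i, LinearExtension (F i → β) => graphOn (F p.1) p.2) := by
  obtain ⟨hfacet, hsurj, hinj, hstep⟩ := hF
  refine ⟨fun p => (hfacet _).graphOn _, fun S hS => ?_, ?_, ?_⟩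
  · obtain ⟨i, hi⟩ := hsurj _ hS.image_fst_of_liftComplex
    obtain ⟨φ, rfl⟩ := exists_graphOn_eq hS.1.1 hi.symm
    exact ⟨toLex ⟨i, φ⟩, rfl⟩
  · rintro ⟨i, (φ : F i → β)⟩ ⟨j, (ψ : F j → β)⟩ h
    obtain rfl : i = j := hinj (by simpa using congrArg (image Prod.fst) h)
    obtain rfl : φ = ψ := graphOn_injective h
    rfl
  · rintro ⟨i, (φ : F i → β)⟩ ⟨j, (ψ : F j → β)⟩ (⟨_, _, hji⟩ | ⟨_, _, hψφ⟩)
    · obtain ⟨x, hx, k, hki, hk⟩ := hstep i j hji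
      obtain ⟨hxi, hxj⟩ := mem_sdiff.mp hx
      obtain ⟨ψ', hψ'⟩ := exists_graphOn_sdiff_eq_singleton (F' := F k) φ hxi hk
      refine ⟨(x, φ ⟨x, hxi⟩), mem_sdiff.mpr ⟨?_, ?_⟩, toLex ⟨k, ψ'⟩, Sigma.Lex.left _ _ hki, hψ'⟩
      · exact mem_graphOn.mpr ⟨hxi, rfl⟩
      · simp [hxj]
    · obtain ⟨t, hne, hlt⟩ := exists_toLinearExtension_update_lt hψφ
      refine ⟨(t.1, φ t), mem_sdiff.mpr ⟨mem_graphOn.mpr ⟨t.2, rfl⟩, ?_⟩,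
        toLex ⟨i, update φ t (ψ t)⟩, Sigma.Lex.right _ _ hlt, graphOn_sdiff_graphOn_update t hne⟩
      simpa using hne

theorem Shellable.liftComplex [Finite β] (h : Shellable Δ) : Shellable (liftComplex Δ β) := by
  obtain ⟨hpure, s, F, hF⟩ := h
  have : Finite (Σₗ i, LinearExtension (F i → β)) := inferInstanceAs (Finite (Σ i, F i → β))
  exact hpure.liftComplex.shellable_of_isShellingOrder (IsShellingOrder.liftComplex hF)

end LiftComplex

theorem indComplex_lexProd_top {β : Type*} [DecidableEq V] (G : SimpleGraph V) :
    indComplex (lexProd G (⊤ : SimpleGraph β)) = liftComplex (indComplex G) β := by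
  ext S
  simp only [indComplex, liftComplex, lexProd, SimpleGraph.top_adj]
  constructor
  · intro h
    refine ⟨fun p hp q hq hpq => ?_, ?_⟩
    · by_contra hne
      exact h p hp q hq (Or.inr ⟨hpq, fun h2 => hne (Prod.ext hpq h2)⟩)
    · intro v hv w hw hadj
      obtain ⟨p, hp, rfl⟩ := mem_image.mp hv
      obtain ⟨q, hq, rfl⟩ := mem_image.mp hw
      exact h p hp q hq (Or.inl hadj)
  · rintro ⟨hinj, hind⟩ p hp q hq (hadj | ⟨hpq, hne⟩)
    · exact hind _ (mem_image_of_mem _ hp) _ (mem_image_of_mem _ hq) hadj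
    · exact hne (congrArg Prod.snd (hinj hp hq hpq))

theorem stmt3_general {α : Type*} [DecidableEq α] (G : SimpleGraph α)
    (m : ℕ) (hm : 1 ≤ m)
    (hsh : Shellable (indComplex G)) :
    Shellable (indComplex (lexProd G (⊤ : SimpleGraph (Fin m)))) := by
  have : Nonempty (Fin m) := ⟨⟨0, hm⟩⟩
  rw [indComplex_lexProd_top]
  exact hsh.liftComplex

theorem stmt3 {α : Type*} [Fintype α] [DecidableEq α] (G : SimpleGraph α)
    (hG : ∃ v w, G.Adj v w) (m : ℕ) (hm : 1 ≤ m)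
    (hsh : Shellable (indComplex G)) :
    Shellable (indComplex (lexProd G (⊤ : SimpleGraph (Fin m)))) :=
  stmt3_general G m hm hsh
end

section
/- Let G be a finite simple graph on vertices x_1, …, x_n and let (s_1, …, s_n) be an n-tuple of positive integers. If the independence complex Ind(G) is shellable, then the independence complex of the expansion G^{(s_1,…,s_n)} is shellable. -/
open Finset

variable {V : Type*}

/-
Order the facets of `Ind G` by a shelling and call the position of a facet its key; any
ordering of the facets by a key with ties broken arbitrarily is a shelling as soon as every
facet `A` exchanges one vertex to reach a facet of smaller key, relative to each other facet
`B` of key at most its own. The facets of the expansion are the lifts `{(v, c v) | v ∈ W}` of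
facets `W` of `Ind G` along choices `c` of copies, and they get the key (key of `W`,
sum of the chosen copies), ordered lexicographically. If `B` lies over a different facet, the
exchange comes from the shelling of `G`, keeping the choices of `A`; if it lies over the same
facet, some copy chosen by `B` is smaller than the one chosen by `A`, and swapping that single
copy lowers the sum.
-/

section ShellingKey

variable [DecidableEq V] {α : Type*} [LinearOrder α]

def IsShellingKey (Δ : Set (Finset V)) (key : Finset V → α) : Prop :=
  ∀ A B, IsFacet Δ A → IsFacet Δ B → A ≠ B → key B ≤ key A →
    ∃ x ∈ A \ B, ∃ C, IsFacet Δ C ∧ key C < key A ∧ A \ C = {x}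

theorem IsShelling.exists_isShellingKey {Δ : Set (Finset V)} {s : ℕ} {F : Fin s → Finset V}
    (hF : IsShelling Δ F) : ∃ key : Finset V → ℕ, IsShellingKey Δ key := by
  obtain ⟨hfacet, hsurj, hinj, hshell⟩ := hF
  let key : Finset V → ℕ := fun A => if h : ∃ i, F i = A then h.choose else 0
  have hkey : ∀ i, key (F i) = i := fun i => by
    have h : ∃ j, F j = F i := ⟨i, rfl⟩
    simp only [key, dif_pos h, hinj h.choose_spec]
  refine ⟨key, ?_⟩
  intro A B hA hB hne hle
  obtain ⟨i, rfl⟩ := hsurj A hA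
  obtain ⟨j, rfl⟩ := hsurj B hB
  rw [hkey, hkey] at hle
  have hji : j < i := lt_of_le_of_ne hle fun h => hne (congrArg F h.symm)
  obtain ⟨x, hx, k, hki, hdiff⟩ := hshell i j hji
  exact ⟨x, hx, F k, hfacet k, by rwa [hkey, hkey], hdiff⟩

theorem Shellable.of_isShellingKey {Δ : Set (Finset V)} {key : Finset V → α}
    (hpure : IsPure Δ) (hfin : {A | IsFacet Δ A}.Finite) (hkey : IsShellingKey Δ key) :
    Shellable Δ := by
  let e := hfin.toFinset.equivFin.symm
  let f := (Tuple.sort fun i => key (e i)).trans e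
  have hmono : Monotone fun i => key (f i) := Tuple.monotone_sort fun i => key (e i)
  have hfacet : ∀ i, IsFacet Δ (f i) := fun i => hfin.mem_toFinset.mp (f i).2
  refine ⟨hpure, _, fun i => f i, hfacet, fun A hA => ?_, ?_, fun i j hji => ?_⟩
  · obtain ⟨i, hi⟩ := f.surjective ⟨A, hfin.mem_toFinset.mpr hA⟩
    exact ⟨i, congrArg Subtype.val hi⟩
  · exact Subtype.val_injective.comp f.injective
  · have hne : (f i : Finset V) ≠ f j := fun h => hji.ne' (f.injective (Subtype.ext h))
    obtain ⟨x, hx, C, hC, hCi, hdiff⟩ :=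
      hkey _ _ (hfacet i) (hfacet j) hne (hmono hji.le)
    obtain ⟨k, hk⟩ := f.surjective ⟨C, hfin.mem_toFinset.mpr hC⟩
    obtain rfl : (f k : Finset V) = C := congrArg Subtype.val hk
    refine ⟨x, hx, k, ?_, hdiff⟩
    by_contra! hik
    exact (hmono hik).not_gt hCi

end ShellingKey

section Expansion

variable [DecidableEq V] {G : SimpleGraph V} {s : V → ℕ} {α : Type*}

def liftFace (c : ∀ v, Fin (s v)) (W : Finset V) : Finset (Σ v, Fin (s v)) :=
  W.image fun v => ⟨v, c v⟩

omit [DecidableEq V] in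
lemma sigmaMk_injective (c : ∀ v, Fin (s v)) :
    Function.Injective fun v => (⟨v, c v⟩ : Σ v, Fin (s v)) :=
  fun _ _ h => congrArg Sigma.fst h

lemma mk_mem_liftFace {c : ∀ v, Fin (s v)} {W : Finset V} {v : V} {j : Fin (s v)} :
    ⟨v, j⟩ ∈ liftFace c W ↔ v ∈ W ∧ c v = j := by
  simp [liftFace]

lemma image_fst_liftFace (c : ∀ v, Fin (s v)) (W : Finset V) :
    (liftFace c W).image Sigma.fst = W := by
  simp [liftFace, Finset.image_image, Function.comp_def]

lemma card_liftFace (c : ∀ v, Fin (s v)) (W : Finset V) : (liftFace c W).card = W.card :=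
  Finset.card_image_of_injective _ (sigmaMk_injective c)

lemma liftFace_sdiff (c : ∀ v, Fin (s v)) (W W' : Finset V) :
    liftFace c W \ liftFace c W' = liftFace c (W \ W') :=
  (Finset.image_sdiff W W' (sigmaMk_injective c)).symm

lemma sum_liftFace {M : Type*} [AddCommMonoid M] (f : (Σ v, Fin (s v)) → M)
    (c : ∀ v, Fin (s v)) (W : Finset V) :
    ∑ p ∈ liftFace c W, f p = ∑ v ∈ W, f ⟨v, c v⟩ :=
  Finset.sum_image fun _ _ _ _ h => sigmaMk_injective c h

lemma liftFace_mem_indComplex (c : ∀ v, Fin (s v)) {W : Finset V} (hW : W ∈ indComplex G) :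
    liftFace c W ∈ indComplex (expansion G s) := by
  simp only [liftFace, indComplex, Set.mem_ofPred_eq, Finset.forall_mem_image]
  rintro v hv w hw ⟨hne, hvw | rfl⟩
  · exact hW v hv w hw hvw
  · exact hne rfl

lemma eq_of_fst_eq_of_mem_indComplex {A : Finset (Σ v, Fin (s v))}
    (hA : A ∈ indComplex (expansion G s)) {p q : Σ v, Fin (s v)} (hp : p ∈ A) (hq : q ∈ A)
    (h : p.1 = q.1) : p = q := by
  by_contra hne
  exact hA p hp q hq ⟨hne, Or.inr h⟩

lemma image_fst_mem_indComplex {A : Finset (Σ v, Fin (s v))}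
    (hA : A ∈ indComplex (expansion G s)) : A.image Sigma.fst ∈ indComplex G := by
  simp only [indComplex, Set.mem_ofPred_eq, Finset.forall_mem_image]
  intro p hp q hq hpq
  have hne : p ≠ q := fun h => G.loopless.irrefl _ (h ▸ hpq)
  exact hA p hp q hq ⟨hne, Or.inl hpq⟩

lemma card_image_fst_of_mem_indComplex {A : Finset (Σ v, Fin (s v))}
    (hA : A ∈ indComplex (expansion G s)) : (A.image Sigma.fst).card = A.card :=
  Finset.card_image_of_injOn fun _ hp _ hq => eq_of_fst_eq_of_mem_indComplex hA hp hq

lemma exists_eq_liftFace (hs : ∀ v, 1 ≤ s v) {A : Finset (Σ v, Fin (s v))}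
    (hA : A ∈ indComplex (expansion G s)) : ∃ c W, A = liftFace c W := by
  have hchoice : ∀ v, ∃ j : Fin (s v), v ∈ A.image Sigma.fst → ⟨v, j⟩ ∈ A := by
    intro v
    by_cases hv : v ∈ A.image Sigma.fst
    · obtain ⟨⟨w, j⟩, hj, rfl⟩ := Finset.mem_image.mp hv
      exact ⟨j, fun _ => hj⟩
    · exact ⟨⟨0, hs v⟩, fun h => absurd h hv⟩
  choose c hc using hchoice
  refine ⟨c, A.image Sigma.fst, Finset.Subset.antisymm (fun p hp => ?_) ?_⟩
  · have hpc : ⟨p.1, c p.1⟩ ∈ A := hc _ (Finset.mem_image_of_mem _ hp)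
    rw [eq_of_fst_eq_of_mem_indComplex hA hp hpc rfl]
    exact Finset.mem_image_of_mem _ (Finset.mem_image_of_mem _ hp)
  · simp only [liftFace, Finset.image_subset_iff]
    exact fun v hv => hc v hv

lemma isFacet_liftFace_iff (c : ∀ v, Fin (s v)) (W : Finset V) :
    IsFacet (indComplex (expansion G s)) (liftFace c W) ↔ IsFacet (indComplex G) W := by
  constructor
  · rintro ⟨hmem, hmax⟩
    refine ⟨image_fst_liftFace c W ▸ image_fst_mem_indComplex hmem, fun W' hW' hsub => ?_⟩
    have h := hmax _ (liftFace_mem_indComplex c hW') (Finset.image_subset_image hsub)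
    rw [← image_fst_liftFace c W, h, image_fst_liftFace]
  · rintro ⟨hmem, hmax⟩
    refine ⟨liftFace_mem_indComplex c hmem, fun B hB hsub => ?_⟩
    have h : W = B.image Sigma.fst := hmax _ (image_fst_mem_indComplex hB)
      (image_fst_liftFace c W ▸ Finset.image_subset_image hsub)
    refine Finset.eq_of_subset_of_card_le hsub ?_
    rw [card_liftFace, h, card_image_fst_of_mem_indComplex hB]

lemma isFacet_image_fst (hs : ∀ v, 1 ≤ s v) {A : Finset (Σ v, Fin (s v))}
    (hA : IsFacet (indComplex (expansion G s)) A) : IsFacet (indComplex G) (A.image Sigma.fst) := by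
  obtain ⟨c, W, rfl⟩ := exists_eq_liftFace hs hA.1
  rw [image_fst_liftFace]
  exact (isFacet_liftFace_iff c W).mp hA

lemma IsPure.expansion (hs : ∀ v, 1 ≤ s v) (hpure : IsPure (indComplex G)) :
    IsPure (indComplex (expansion G s)) := by
  intro A B hA hB
  rw [← card_image_fst_of_mem_indComplex hA.1, ← card_image_fst_of_mem_indComplex hB.1]
  exact hpure _ _ (isFacet_image_fst hs hA) (isFacet_image_fst hs hB)

def expansionKey (key : Finset V → α) (A : Finset (Σ v, Fin (s v))) : α ×ₗ ℕ :=
  toLex (key (A.image Sigma.fst), ∑ p ∈ A, (p.2 : ℕ))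

lemma expansionKey_liftFace (key : Finset V → α) (c : ∀ v, Fin (s v))
    (W : Finset V) : expansionKey key (liftFace c W) = toLex (key W, ∑ v ∈ W, (c v : ℕ)) := by
  rw [expansionKey, image_fst_liftFace, sum_liftFace]

variable [LinearOrder α] {key : Finset V → α}

lemma IsShellingKey.exists_expansion_exchange_of_ne (hkey : IsShellingKey (indComplex G) key)
    {W W' : Finset V} (hW : IsFacet (indComplex G) W) (hW' : IsFacet (indComplex G) W')
    (hne : W ≠ W') (hle : key W' ≤ key W) (a b : ∀ v, Fin (s v)) :
    ∃ x ∈ liftFace a W \ liftFace b W', ∃ C, IsFacet (indComplex (expansion G s)) C ∧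
      expansionKey key C < expansionKey key (liftFace a W) ∧ liftFace a W \ C = {x} := by
  obtain ⟨x, hx, C, hC, hCW, hdiff⟩ := hkey W W' hW hW' hne hle
  rw [Finset.mem_sdiff] at hx
  refine ⟨⟨x, a x⟩, ?_, liftFace a C, (isFacet_liftFace_iff a C).mpr hC, ?_, ?_⟩
  · simp only [Finset.mem_sdiff, mk_mem_liftFace, and_true]
    exact ⟨hx.1, fun h => hx.2 h.1⟩
  · rw [expansionKey_liftFace, expansionKey_liftFace, Prod.Lex.toLex_lt_toLex]
    exact Or.inl hCW
  · rw [liftFace_sdiff, hdiff]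
    rfl

lemma exists_expansion_exchange_of_eq {W : Finset V} (hW : IsFacet (indComplex G) W)
    {a b : ∀ v, Fin (s v)} (hne : liftFace a W ≠ liftFace b W)
    (hle : ∑ v ∈ W, (b v : ℕ) ≤ ∑ v ∈ W, (a v : ℕ)) :
    ∃ x ∈ liftFace a W \ liftFace b W, ∃ C, IsFacet (indComplex (expansion G s)) C ∧
      expansionKey key C < expansionKey key (liftFace a W) ∧ liftFace a W \ C = {x} := by
  obtain ⟨v, hv, hba⟩ : ∃ v ∈ W, (b v : ℕ) < a v := by
    by_contra! hab
    have heq := (Finset.sum_eq_sum_iff_of_le hab).mp (le_antisymm (Finset.sum_le_sum hab) hle)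
    exact hne (Finset.image_congr fun w hw => by simp [Fin.ext (heq w hw)])
  let c : ∀ w, Fin (s w) := fun w => if h : w = v then h ▸ b v else a w
  refine ⟨⟨v, a v⟩, ?_, liftFace c W, (isFacet_liftFace_iff c W).mpr hW, ?_, ?_⟩
  · simp only [Finset.mem_sdiff, mk_mem_liftFace, and_true]
    exact ⟨hv, fun h => hba.ne (congrArg Fin.val h.2)⟩
  · rw [expansionKey_liftFace, expansionKey_liftFace, Prod.Lex.toLex_lt_toLex]
    refine Or.inr ⟨rfl, Finset.sum_lt_sum (fun w _ => ?_) ⟨v, hv, by simpa [c] using hba⟩⟩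
    by_cases hw : w = v
    · subst hw
      simpa [c] using hba.le
    · simp [c, hw]
  · ext ⟨w, j⟩
    by_cases hw : w = v
    · subst hw
      simp only [Finset.mem_sdiff, mk_mem_liftFace, hv, true_and, dite_true,
        Finset.mem_singleton, Sigma.mk.injEq, heq_eq_eq, c]
      exact ⟨fun h => h.1.symm, fun h => ⟨h.symm, fun hb => hba.ne (h ▸ hb ▸ rfl)⟩⟩
    · simp [mk_mem_liftFace, c, hw]

theorem IsShellingKey.expansion (hs : ∀ v, 1 ≤ s v) (hkey : IsShellingKey (indComplex G) key) :
    IsShellingKey (indComplex (expansion G s)) (expansionKey key) := by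
  intro A B hA hB hne hle
  obtain ⟨a, W, rfl⟩ := exists_eq_liftFace hs hA.1
  obtain ⟨b, W', rfl⟩ := exists_eq_liftFace hs hB.1
  rw [isFacet_liftFace_iff] at hA hB
  rw [expansionKey_liftFace, expansionKey_liftFace, Prod.Lex.toLex_le_toLex] at hle
  by_cases hW : W = W'
  · subst hW
    exact exists_expansion_exchange_of_eq hA hne (hle.resolve_left (lt_irrefl _)).2
  · exact hkey.exists_expansion_exchange_of_ne hA hB hW (hle.elim le_of_lt fun h => h.1.le) a b

end Expansion

theorem stmt14 {V : Type*} [Fintype V] [DecidableEq V] (G : SimpleGraph V)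
    (s : V → ℕ) (hs : ∀ v, 1 ≤ s v)
    (hsh : Shellable (indComplex G)) :
    Shellable (indComplex (expansion G s)) := by
  obtain ⟨hpure, _, F, hF⟩ := hsh
  obtain ⟨key, hkey⟩ := hF.exists_isShellingKey
  exact Shellable.of_isShellingKey (hpure.expansion hs) (Set.toFinite _) (hkey.expansion hs)
end
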